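/- Let X, Y, Z be complete path metric spaces, and let H denote the set of nonexpansive maps X → Y equipped with the metric (d_sup)_ℓ, the intrinsic metric associated to the supremum metric d_sup. Then a function f : Z × X → Y is nonexpansive for the ℓ¹ distance d((z,x),(z',x')) = d_Z(z,z') + d_X(x,x') if and only if for each z ∈ Z the map f(z,·) : X → Y is nonexpansive and the curried map z ↦ f(z,·) is a nonexpansive map from Z to (H, (d_sup)_ℓ). -/

import Mathlib

/-!
If `f` is `ℓ¹`-nonexpansive, then `z ↦ f(z, ·)` is already `1`-Lipschitz into `(H, d_sup)`, and a
`1`-Lipschitz map carries `1`-Lipschitz curves to `1`-Lipschitz curves, so it does not increase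
intrinsic distances; as `d_Z` is intrinsic this gives `(d_sup)_ℓ(f(z, ·), f(z', ·)) ≤ d_Z(z, z')`.
Conversely `d_sup ≤ (d_sup)_ℓ`, and the triangle inequality through `(z', x)` splits
`d(f(z, x), f(z', x'))` into a sup-distance term and a slice term.
-/

open ENNReal NNReal

/-- The space of nonexpansive (`1`-Lipschitz) maps `Y → X` between extended metric spaces. -/
def NonexpMap (Y X : Type*) [EMetricSpace Y] [EMetricSpace X] : Type _ :=
  {f : Y → X // LipschitzWith 1 f}

/-- The supremum extended metric on the space of nonexpansive maps. -/
noncomputable instance NonexpMap.instEMetricSpace (Y X : Type*) [EMetricSpace Y]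
    [EMetricSpace X] : EMetricSpace (NonexpMap Y X) where
  edist f g := ⨆ y : Y, edist (f.1 y) (g.1 y)
  edist_self f := by simp
  edist_comm f g := by simp [edist_comm]
  edist_triangle f g h :=
    iSup_le fun y =>
      le_trans (edist_triangle (f.1 y) (g.1 y) (h.1 y))
        (add_le_add (le_iSup (fun y => edist (f.1 y) (g.1 y)) y)
          (le_iSup (fun y => edist (g.1 y) (h.1 y)) y))
  eq_of_edist_eq_zero := by
    intro f g h
    refine Subtype.ext (funext fun y => ?_)
    exact eq_of_edist_eq_zero
      (le_antisymm (le_trans (le_iSup (fun y => edist (f.1 y) (g.1 y)) y) h.le) zero_le)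

/-- Constructor for `NonexpMap`. -/
def NonexpMap.mk {Y X : Type*} [EMetricSpace Y] [EMetricSpace X] (f : Y → X)
    (hf : LipschitzWith 1 f) : NonexpMap Y X :=
  ⟨f, hf⟩

/-- The intrinsic (length) extended distance associated to an extended metric:
the infimum of lengths `ℓ` of `1`-Lipschitz curves `[0, ℓ] → X` joining the two points. -/
noncomputable def intrinsicEDist {X : Type*} [EMetricSpace X] (x x' : X) : ℝ≥0∞ :=
  sInf {L : ℝ≥0∞ | ∃ ℓ : ℝ≥0, L = (ℓ : ℝ≥0∞) ∧ ∃ φ : ℝ → X,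
    LipschitzOnWith 1 φ (Set.Icc 0 (ℓ : ℝ)) ∧ φ 0 = x ∧ φ (ℓ : ℝ) = x'}

@[simp]
lemma NonexpMap.mk_val {X Y : Type*} [EMetricSpace X] [EMetricSpace Y] (f : X → Y)
    (hf : LipschitzWith 1 f) : (NonexpMap.mk f hf).1 = f :=
  rfl

lemma NonexpMap.edist_le_iff {X Y : Type*} [EMetricSpace X] [EMetricSpace Y]
    {f g : NonexpMap X Y} {r : ℝ≥0∞} : edist f g ≤ r ↔ ∀ x, edist (f.1 x) (g.1 x) ≤ r :=
  iSup_le_iff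

lemma edist_le_intrinsicEDist {X : Type*} [EMetricSpace X] (x x' : X) :
    edist x x' ≤ intrinsicEDist x x' := by
  refine le_sInf ?_
  rintro L ⟨ℓ, rfl, φ, hφ, rfl, rfl⟩
  calc edist (φ 0) (φ ℓ) ≤ 1 * edist (0 : ℝ) ℓ :=
        hφ (Set.left_mem_Icc.2 ℓ.2) (Set.right_mem_Icc.2 ℓ.2)
    _ = ℓ := by simp [edist_dist]

lemma LipschitzWith.intrinsicEDist_le {X Y : Type*} [EMetricSpace X] [EMetricSpace Y]
    {g : X → Y} (hg : LipschitzWith 1 g) (x x' : X) :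
    intrinsicEDist (g x) (g x') ≤ intrinsicEDist x x' := by
  refine le_sInf ?_
  rintro L ⟨ℓ, rfl, φ, hφ, rfl, rfl⟩
  exact sInf_le ⟨ℓ, rfl, g ∘ φ, by simpa using hg.comp_lipschitzOnWith hφ, rfl, rfl⟩

section Curry

variable {X Y Z : Type*} [EMetricSpace X] [EMetricSpace Y] [EMetricSpace Z] {f : Z × X → Y}

lemma lipschitzWith_slice_of_edist_le_add
    (hf : ∀ p q : Z × X, edist (f p) (f q) ≤ edist p.1 q.1 + edist p.2 q.2) (z : Z) :
    LipschitzWith 1 (fun x => f (z, x)) :=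
  .of_edist_le fun x x' => by simpa using hf (z, x) (z, x')

lemma lipschitzWith_curry_of_edist_le_add
    (hf : ∀ p q : Z × X, edist (f p) (f q) ≤ edist p.1 q.1 + edist p.2 q.2) :
    LipschitzWith 1 fun z => NonexpMap.mk (fun x => f (z, x))
      (lipschitzWith_slice_of_edist_le_add hf z) :=
  .of_edist_le fun z z' => NonexpMap.edist_le_iff.2 fun x => by simpa using hf (z, x) (z', x)

lemma edist_le_add_of_lipschitzWith_curry (h : ∀ z : Z, LipschitzWith 1 (fun x => f (z, x)))
    (hc : LipschitzWith 1 fun z => NonexpMap.mk (fun x => f (z, x)) (h z)) :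
    ∀ p q : Z × X, edist (f p) (f q) ≤ edist p.1 q.1 + edist p.2 q.2 := by
  rintro ⟨z, x⟩ ⟨z', x'⟩
  have hz : edist (f (z, x)) (f (z', x)) ≤ edist z z' :=
    NonexpMap.edist_le_iff.1 (by simpa using hc.edist_le_mul z z') x
  calc edist (f (z, x)) (f (z', x'))
      ≤ edist (f (z, x)) (f (z', x)) + edist (f (z', x)) (f (z', x')) := edist_triangle _ _ _
    _ ≤ edist z z' + edist x x' := add_le_add hz (by simpa using (h z').edist_le_mul x x')

end Curry

theorem l1_curry_adjunction_general {X Y Z : Type*}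
    [EMetricSpace X] [EMetricSpace Y] [EMetricSpace Z]
    (hZ : ∀ z z' : Z, edist z z' = intrinsicEDist z z')
    (f : Z × X → Y) :
    (∀ p q : Z × X, edist (f p) (f q) ≤ edist p.1 q.1 + edist p.2 q.2) ↔
      ∃ h : ∀ z : Z, LipschitzWith 1 (fun x => f (z, x)),
        ∀ z z' : Z,
          intrinsicEDist (NonexpMap.mk (fun x => f (z, x)) (h z))
              (NonexpMap.mk (fun x => f (z', x)) (h z')) ≤ edist z z' := by
  refine ⟨fun hf => ⟨lipschitzWith_slice_of_edist_le_add hf, fun z z' => ?_⟩, fun ⟨h, hc⟩ => ?_⟩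
  · rw [hZ z z']
    exact (lipschitzWith_curry_of_edist_le_add hf).intrinsicEDist_le z z'
  · exact edist_le_add_of_lipschitzWith_curry h
      (.of_edist_le fun z z' => (edist_le_intrinsicEDist _ _).trans (hc z z'))

/-- Currying adjunction for the `ℓ¹` tensor product of complete path metric spaces:
`f : Z × X → Y` is nonexpansive for the `ℓ¹` distance on `Z × X` if and only if each slice
`f(z, ·)` is nonexpansive and `z ↦ f(z, ·)` is nonexpansive from `Z` into the space `H` of
nonexpansive maps `X → Y` endowed with the intrinsic metric `(d_sup)_ℓ` associated to the
supremum metric. -/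
theorem l1_curry_adjunction {X Y Z : Type*}
    [EMetricSpace X] [CompleteSpace X] [EMetricSpace Y] [CompleteSpace Y]
    [EMetricSpace Z] [CompleteSpace Z]
    (hX : ∀ x x' : X, edist x x' = intrinsicEDist x x')
    (hY : ∀ y y' : Y, edist y y' = intrinsicEDist y y')
    (hZ : ∀ z z' : Z, edist z z' = intrinsicEDist z z')
    (f : Z × X → Y) :
    (∀ p q : Z × X, edist (f p) (f q) ≤ edist p.1 q.1 + edist p.2 q.2) ↔
      ∃ h : ∀ z : Z, LipschitzWith 1 (fun x => f (z, x)),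
        ∀ z z' : Z,
          intrinsicEDist (NonexpMap.mk (fun x => f (z, x)) (h z))
              (NonexpMap.mk (fun x => f (z', x)) (h z')) ≤ edist z z' :=
  l1_curry_adjunction_general hZ f
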